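/- arXiv:2309.10562 — 2 statements merged into one kernel-verified Lean document; each statement's English description precedes it below -/
import Mathlib

section
/- With f(0) = 01, f(1) = 0, g(0) = 2, g(1) = g(2) = 10, and the coding μ defined by μ(1) = 0, μ(0) = 1, μ(2) = 0 on {0,1,2}: μ(g^∞(1)) = f^∞(0), i.e. the binary Fibonacci sequence fib equals μ applied letterwise to the fixed point of g starting at 1. -/
/-!
The coding `μ` intertwines the two morphisms: `f (μ a) = μ (g a)` letterwise, so `μ` maps every
fixed point of `g` to a fixed point of `f`. Since `f` is non-erasing and `f 0 = 01` has length
two, the `(n+1)`-st letter of a fixed point of `f` is produced by its first `n+1` letters, so a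
fixed point of `f` is determined by its first letter; `μ (g^∞(1))` starts
with `μ 1 = 0`, hence it is `f^∞(0)`.
-/

/-- Applying a morphism `f : Γ → Γ⁺` to an infinite sequence `σ`. -/
def seqFlat {Γ : Type*} (f : Γ → List Γ) (σ : ℕ → Γ) (n : ℕ) : Γ :=
  (((List.range (n + 1)).flatMap fun i => f (σ i)).getD n (σ 0))

/-- The Fibonacci morphism `f 0 = 01`, `f 1 = 0`. -/
def fibMor : ℕ → List ℕ := fun n => if n = 0 then [0, 1] else [0]

/-- The morphism `g 0 = 2`, `g 1 = g 2 = 10` on `{0,1,2}`. -/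
def gMor : ℕ → List ℕ := fun n => if n = 0 then [2] else [1, 0]

/-- The coding `μ 0 = 1`, `μ 1 = μ 2 = 0`. -/
def μCode : ℕ → ℕ := fun n => if n = 0 then 1 else 0

section seqFlat

variable {Γ Δ : Type*}

theorem seqFlat_comp (f : Δ → List Δ) (g : Γ → List Γ) (μ : Γ → Δ)
    (hμ : ∀ a, f (μ a) = (g a).map μ) (σ : ℕ → Γ) :
    seqFlat f (μ ∘ σ) = μ ∘ seqFlat g σ := by
  funext n
  have hflat : ((List.range (n + 1)).flatMap fun i => f (μ (σ i)))
      = ((List.range (n + 1)).flatMap fun i => g (σ i)).map μ := by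
    rw [List.map_flatMap]
    exact List.flatMap_congr fun i _ => hμ (σ i)
  simp only [seqFlat, Function.comp_apply, hflat, List.getD_map]

theorem length_flatMap_range_succ_ge {f : Γ → List Γ} (hf : ∀ a, f a ≠ []) (σ : ℕ → Γ)
    (n : ℕ) : (f (σ 0)).length + n ≤ ((List.range (n + 1)).flatMap fun i => f (σ i)).length := by
  induction n with
  | zero => simp
  | succ n ih =>
    have hne := List.length_pos_iff.mpr (hf (σ (n + 1)))
    rw [List.range_succ, List.flatMap_append, List.length_append]
    simp only [List.flatMap_cons, List.flatMap_nil, List.append_nil]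
    omega

theorem seqFlat_succ {f : Γ → List Γ} (hf : ∀ a, f a ≠ []) {σ : ℕ → Γ}
    (h0 : 1 < (f (σ 0)).length) (n : ℕ) :
    seqFlat f σ (n + 1) = ((List.range (n + 1)).flatMap fun i => f (σ i)).getD (n + 1) (σ 0) := by
  have hlen := length_flatMap_range_succ_ge hf σ n
  rw [seqFlat, List.range_succ, List.flatMap_append, List.getD_append _ _ _ _ (by omega)]

theorem eq_of_seqFlat_eq_self {f : Γ → List Γ} (hf : ∀ a, f a ≠ []) {σ τ : ℕ → Γ}
    (hσ : seqFlat f σ = σ) (hτ : seqFlat f τ = τ) (h0 : σ 0 = τ 0)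
    (hlong : 1 < (f (σ 0)).length) : σ = τ := by
  funext n
  induction n using Nat.strong_induction_on with
  | _ n ih =>
    cases n with
    | zero => exact h0
    | succ n =>
      have hprefix : ((List.range (n + 1)).flatMap fun i => f (σ i))
          = (List.range (n + 1)).flatMap fun i => f (τ i) :=
        List.flatMap_congr fun i hi => by rw [ih i (List.mem_range.mp hi)]
      rw [← hσ, ← hτ, seqFlat_succ hf hlong, seqFlat_succ hf (h0 ▸ hlong), hprefix, h0]

end seqFlat

theorem fibMor_ne_nil (a : ℕ) : fibMor a ≠ [] := by
  unfold fibMor; split <;> simp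

theorem fibMor_μCode (a : ℕ) : fibMor (μCode a) = (gMor a).map μCode := by
  by_cases h : a = 0 <;> simp [fibMor, gMor, μCode, h]

/-- `μ(g^∞(1)) = fib`: the binary Fibonacci sequence `f^∞(0)` equals the coding `μ`
applied letterwise to the fixed point of `g` starting at `1`. -/
theorem mu_g_eq_fib (σf σg : ℕ → ℕ)
    (hf0 : σf 0 = 0) (hffix : seqFlat fibMor σf = σf)
    (hg0 : σg 0 = 1) (hgfix : seqFlat gMor σg = σg) :
    ∀ n, μCode (σg n) = σf n := by
  have hfix : seqFlat fibMor (μCode ∘ σg) = μCode ∘ σg := by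
    rw [seqFlat_comp fibMor gMor μCode fibMor_μCode, hgfix]
  have hμ0 : (μCode ∘ σg) 0 = 0 := by simp [hg0, μCode]
  have heq := eq_of_seqFlat_eq_self fibMor_ne_nil hfix hffix (hμ0.trans hf0.symm)
    (by rw [hμ0]; decide)
  exact congrFun heq
end

section
/- Auxiliary claim for Theorem on tail(fib): with f(0)=01, f(1)=0, g(0)=2, g(1)=g(2)=10, ρ(0)=ρ(2)=0, ρ(1)=1, for every n ∈ ℕ: writing fⁿ(0) = 0·vₙ and fⁿ(1) = 0·uₙ (both fⁿ(0) and fⁿ(1) start with 0), one has ρ(gⁿ(1)) = vₙ·0 and ρ(gⁿ(0)) = uₙ·0. -/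
/-- Applying a morphism `f : Γ → Γ⁺` (extended to words by concatenation) `n` times. -/
def wordIter {Γ : Type*} (f : Γ → List Γ) (n : ℕ) (w : List Γ) : List Γ :=
  (fun v => v.flatMap f)^[n] w

/-- The coding `ρ 0 = ρ 2 = 0`, `ρ 1 = 1`. -/
def ρCode : ℕ → ℕ := fun n => if n = 1 then 1 else 0

/-! Both `fⁿ(0), fⁿ(1)` and `ρ(gⁿ(1)), ρ(gⁿ(0))` satisfy the Fibonacci recursion
`Xₙ₊₁ = Xₙ Yₙ`, `Yₙ₊₁ = Xₙ` (for `g` because `gⁿ⁺¹(0) = gⁿ(2) = gⁿ(1)` once `n ≥ 1`), so moving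
the leading `0` of the `f`-words to the end is preserved by the recursion; at `n = 1` it is
checked directly. -/

section WordIter

variable {Γ : Type*} (f : Γ → List Γ)

lemma wordIter_succ (n : ℕ) (w : List Γ) :
    wordIter f (n + 1) w = wordIter f n (w.flatMap f) := by
  simp only [wordIter, Function.iterate_succ_apply]

lemma wordIter_append (n : ℕ) (a b : List Γ) :
    wordIter f n (a ++ b) = wordIter f n a ++ wordIter f n b := by
  induction n generalizing a b with
  | zero => rfl
  | succ n ih => simp only [wordIter_succ, List.flatMap_append, ih]

lemma wordIter_succ_singleton (n : ℕ) (a : Γ) :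
    wordIter f (n + 1) [a] = wordIter f n (f a) := by
  rw [wordIter_succ, List.flatMap_singleton]

end WordIter

lemma fibIter_succ_zero (n : ℕ) :
    wordIter fibMor (n + 1) [0] = wordIter fibMor n [0] ++ wordIter fibMor n [1] := by
  rw [wordIter_succ_singleton, ← wordIter_append]
  rfl

lemma fibIter_succ_one (n : ℕ) : wordIter fibMor (n + 1) [1] = wordIter fibMor n [0] :=
  wordIter_succ_singleton fibMor n 1

lemma gIter_succ_one (n : ℕ) :
    wordIter gMor (n + 1) [1] = wordIter gMor n [1] ++ wordIter gMor n [0] := by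
  rw [wordIter_succ_singleton, ← wordIter_append]
  rfl

lemma gIter_succ_zero {n : ℕ} (hn : 1 ≤ n) : wordIter gMor (n + 1) [0] = wordIter gMor n [1] := by
  obtain ⟨m, rfl⟩ := Nat.exists_eq_add_of_le' hn
  rw [wordIter_succ_singleton, gMor, if_pos rfl, wordIter_succ_singleton, wordIter_succ_singleton]
  rfl

/-- Auxiliary claim: for every `n ≥ 1`, writing `fⁿ(0) = 0·vₙ` and `fⁿ(1) = 0·uₙ`
(both start with `0`), one has `ρ(gⁿ(1)) = vₙ·0` and `ρ(gⁿ(0)) = uₙ·0`. -/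
theorem rho_g_aux_claim :
    ∀ n, 1 ≤ n → ∃ (v u : List ℕ),
      wordIter fibMor n [0] = 0 :: v ∧
      wordIter fibMor n [1] = 0 :: u ∧
      (wordIter gMor n [1]).map ρCode = v ++ [0] ∧
      (wordIter gMor n [0]).map ρCode = u ++ [0] := by
  intro n hn
  induction n, hn using Nat.le_induction with
  | base => exact ⟨[1], [], by decide, by decide, by decide, by decide⟩
  | succ n hn ih =>
    obtain ⟨v, u, hf0, hf1, hg1, hg0⟩ := ih
    refine ⟨v ++ 0 :: u, v, ?_, ?_, ?_, ?_⟩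
    · rw [fibIter_succ_zero, hf0, hf1, List.cons_append]
    · rw [fibIter_succ_one, hf0]
    · rw [gIter_succ_one, List.map_append, hg1, hg0]
      simp only [List.append_assoc, List.cons_append, List.nil_append]
    · rw [gIter_succ_zero hn, hg1]
end
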